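/- Let 𝒞 be a finite collection of c ≥ 1 cycles with t total turns whose union of covered pixel sets is a connected set P. Then there exists a tour of P (a single cycle covering every pixel of P) with at most t + 2(c − 1) turns. -/

import Mathlib

/-- A pixel is a point of `ℤ × ℤ`. -/
abbrev Pixel : Type := ℤ × ℤ

/-- Two pixels are adjacent if their ℓ¹-distance is 1. -/
def Adjacent (p q : Pixel) : Prop := |p.1 - q.1| + |p.2 - q.2| = 1

/-- A cycle: a cyclic sequence of `k ≥ 2` pixels (encoded as a `k`-periodic
function on `ℤ`) in which consecutive pixels are adjacent. -/
structure GridCycle where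
  k : ℕ
  two_le : 2 ≤ k
  pts : ℤ → Pixel
  periodic : ∀ i : ℤ, pts (i + k) = pts i
  adj : ∀ i : ℤ, Adjacent (pts i) (pts (i + 1))

/-- The set of pixels covered by a cycle. -/
def GridCycle.covers (C : GridCycle) : Set Pixel := Set.range C.pts

/-- Turn cost at position `i`: 0 if the walk goes straight, 2 for a U-turn,
1 for a 90° turn. -/
def GridCycle.turnCost (C : GridCycle) (i : ℤ) : ℕ :=
  if C.pts (i + 1) - C.pts i = C.pts i - C.pts (i - 1) then 0
  else if C.pts (i + 1) - C.pts i = -(C.pts i - C.pts (i - 1)) then 2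
  else 1

/-- The number of turns of a cycle: total turn cost over all positions. -/
def GridCycle.turns (C : GridCycle) : ℕ :=
  ∑ i ∈ Finset.range C.k, C.turnCost (i : ℤ)

/-- A set of pixels is connected under adjacency. -/
def ConnectedIn (P : Set Pixel) : Prop :=
  ∀ p ∈ P, ∀ q ∈ P, Relation.ReflTransGen (fun a b => b ∈ P ∧ Adjacent a b) p q

/-- A region is a finite nonempty set of pixels connected under adjacency. -/
def IsRegion (P : Set Pixel) : Prop := P.Finite ∧ P.Nonempty ∧ ConnectedIn P

/-- A tour of `P`: a cycle whose pixels lie in `P` covering every pixel of `P`. -/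
def IsTour (P : Set Pixel) (C : GridCycle) : Prop := C.covers = P

/-- A cycle cover of `P`: a finite collection of cycles with pixels in `P`
covering every pixel of `P`. -/
def IsCycleCover (P : Set Pixel) (CC : List GridCycle) : Prop :=
  (∀ C ∈ CC, C.covers ⊆ P) ∧ ∀ p ∈ P, ∃ C ∈ CC, p ∈ C.covers

/-- The number of turns of a cycle cover. -/
def coverTurns (CC : List GridCycle) : ℕ := (CC.map GridCycle.turns).sum

/-- A horizontal strip of `P`: a maximal horizontal run of pixels of `P`. -/
def IsHStrip (P S : Set Pixel) : Prop :=
  ∃ x y : ℤ, ∃ ℓ : ℕ, S = {p : Pixel | p.2 = y ∧ x ≤ p.1 ∧ p.1 ≤ x + (ℓ : ℤ)} ∧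
    S ⊆ P ∧ (x - 1, y) ∉ P ∧ (x + (ℓ : ℤ) + 1, y) ∉ P

/-- A vertical strip of `P`: a maximal vertical run of pixels of `P`. -/
def IsVStrip (P S : Set Pixel) : Prop :=
  ∃ x y : ℤ, ∃ ℓ : ℕ, S = {p : Pixel | p.1 = x ∧ y ≤ p.2 ∧ p.2 ≤ y + (ℓ : ℤ)} ∧
    S ⊆ P ∧ (x, y - 1) ∉ P ∧ (x, y + (ℓ : ℤ) + 1) ∉ P

/-- A strip of `P` is a horizontal or vertical strip. -/
def IsStrip (P S : Set Pixel) : Prop := IsHStrip P S ∨ IsVStrip P S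

/-- A strip cover of `P`: a set of strips of `P` whose union is `P`. -/
def IsStripCover (P : Set Pixel) (F : Set (Set Pixel)) : Prop :=
  (∀ S ∈ F, IsStrip P S) ∧ ⋃₀ F = P

/-- The minimum size of a strip cover of `P`. -/
noncomputable def minStripCover (P : Set Pixel) : ℕ :=
  sInf {m | ∃ F, IsStripCover P F ∧ F.ncard = m}

/-- A rook placement in `P`: a subset of `P` no two distinct elements of which
lie in a common strip of `P`. -/
def IsRookPlacement (P R : Set Pixel) : Prop :=
  R ⊆ P ∧ ∀ p ∈ R, ∀ q ∈ R, p ≠ q → ¬∃ S, IsStrip P S ∧ p ∈ S ∧ q ∈ S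

/-- A maximal rook placement: every pixel of `P` lies in a common strip with
some element of `R`. -/
def IsMaximalRookPlacement (P R : Set Pixel) : Prop :=
  IsRookPlacement P R ∧ ∀ p ∈ P, ∃ r ∈ R, ∃ S, IsStrip P S ∧ p ∈ S ∧ r ∈ S

/-! ### Basic direction arithmetic -/

/-- Turn cost as a function of incoming and outgoing direction. -/
def tc (u v : Pixel) : ℕ := if v = u then 0 else if v = -u then 2 else 1

/-- A unit direction. -/
def UnitDir (d : Pixel) : Prop := |d.1| + |d.2| = 1

lemma unitDir_cases {d : Pixel} (h : UnitDir d) :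
    d = (1,0) ∨ d = (-1,0) ∨ d = (0,1) ∨ d = (0,-1) := by
  obtain ⟨x, y⟩ := d
  unfold UnitDir at h
  simp only [Prod.mk.injEq]
  rcases abs_cases x with ⟨h1, hx⟩ | ⟨h1, hx⟩ <;> rcases abs_cases y with ⟨h2, hy⟩ | ⟨h2, hy⟩ <;>
    rw [h1, h2] at h <;> omega

lemma adjacent_symm {p q : Pixel} (h : Adjacent p q) : Adjacent q p := by
  unfold Adjacent at *
  rw [abs_sub_comm, abs_sub_comm q.2]; exact h

lemma adjacent_iff_unit {p q : Pixel} : Adjacent p q ↔ UnitDir (q - p) := by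
  unfold Adjacent UnitDir
  rw [abs_sub_comm, abs_sub_comm p.2]
  rfl

lemma adjacent_of_diff {p q p' q' : Pixel} (h : Adjacent p q) (hd : q' - p' = q - p) :
    Adjacent p' q' := by
  rw [adjacent_iff_unit] at h ⊢
  rw [hd]; exact h

lemma turnCost_eq_tc (C : GridCycle) (i : ℤ) :
    C.turnCost i = tc (C.pts i - C.pts (i-1)) (C.pts (i+1) - C.pts i) := rfl

lemma tc_neg_rev (u v : Pixel) : tc (-v) (-u) = tc u v := by
  simp only [tc, neg_neg, neg_inj]
  by_cases h1 : v = u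
  · rw [if_pos h1, if_pos h1.symm]
  · rw [if_neg h1, if_neg (fun h : u = v => h1 h.symm)]
    by_cases h2 : v = -u
    · rw [if_pos h2, if_pos h2.symm]
    · rw [if_neg h2, if_neg (fun h : -u = v => h2 h.symm)]

lemma unitDir_in (C : GridCycle) (i : ℤ) : UnitDir (C.pts i - C.pts (i-1)) := by
  have := C.adj (i-1)
  rw [adjacent_iff_unit] at this
  simpa using this

lemma unitDir_out (C : GridCycle) (i : ℤ) : UnitDir (C.pts (i+1) - C.pts i) := by
  have := C.adj i
  rw [adjacent_iff_unit] at this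
  exact this
/-! ### Periodicity machinery -/

lemma GridCycle.pts_sub_k (C : GridCycle) (i : ℤ) : C.pts (i - C.k) = C.pts i := by
  have := C.periodic (i - C.k)
  rw [sub_add_cancel] at this
  exact this.symm

lemma GridCycle.pts_add_mul (C : GridCycle) (i : ℤ) (n : ℤ) :
    C.pts (i + n * C.k) = C.pts i := by
  induction n using Int.induction_on with
  | zero => simp
  | succ m ih =>
      have : i + (m + 1) * C.k = (i + m * C.k) + C.k := by ring
      rw [this, C.periodic, ih]
  | pred m ih =>
      have : i + (-m - 1) * C.k = (i + (-m) * C.k) - C.k := by ring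
      rw [this, C.pts_sub_k, ih]

lemma GridCycle.k_pos (C : GridCycle) : 0 < (C.k : ℤ) := by
  have := C.two_le; omega

lemma GridCycle.pts_emod (C : GridCycle) (i : ℤ) : C.pts (i % C.k) = C.pts i := by
  conv_rhs => rw [show i = i % C.k + (i / C.k) * C.k from by rw [mul_comm]; exact (Int.emod_add_mul_ediv i C.k).symm]
  rw [C.pts_add_mul]

lemma GridCycle.turnCost_add_k (C : GridCycle) (i : ℤ) :
    C.turnCost (i + C.k) = C.turnCost i := by
  simp only [GridCycle.turnCost,
    show i + (C.k:ℤ) + 1 = (i+1) + C.k from by ring,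
    show i + (C.k:ℤ) - 1 = (i-1) + C.k from by ring, C.periodic]

lemma sum_shift_one (k : ℕ) (f : ℤ → ℕ) (hf : ∀ i, f (i + k) = f i) (a : ℤ) :
    ∑ m ∈ Finset.range k, f (a + 1 + m) = ∑ m ∈ Finset.range k, f (a + m) := by
  cases k with
  | zero => simp
  | succ n =>
      rw [Finset.sum_range_succ, Finset.sum_range_succ']
      have h1 : ∀ m : ℕ, a + ((m : ℤ) + 1) = a + 1 + m := by intro m; ring
      have h2 : a + 1 + (n : ℤ) = a + 0 + (n + 1 : ℕ) := by push_cast; ring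
      rw [h2, hf (a + 0)]
      have h3 : ∀ m ∈ Finset.range n, f (a + ((m:ℕ) + 1 : ℕ)) = f (a + 1 + (m:ℕ)) := by
        intro m _; congr 1; push_cast; ring
      rw [Finset.sum_congr rfl h3]; norm_num

lemma sum_shift (k : ℕ) (f : ℤ → ℕ) (hf : ∀ i, f (i + k) = f i) (a : ℤ) :
    ∑ m ∈ Finset.range k, f (a + m) = ∑ m ∈ Finset.range k, f (m : ℤ) := by
  induction a using Int.induction_on with
  | zero => simp
  | succ m ih => rw [← ih, sum_shift_one k f hf]
  | pred m ih =>
      rw [← ih]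
      have := sum_shift_one k f hf (-(m:ℤ) - 1)
      rw [show -(m:ℤ) - 1 + 1 = -(m:ℤ) from by ring] at this
      exact this.symm

lemma GridCycle.turns_window (C : GridCycle) (a : ℤ) :
    ∑ m ∈ Finset.range C.k, C.turnCost (a + m) = C.turns := by
  rw [GridCycle.turns]
  exact sum_shift C.k C.turnCost C.turnCost_add_k a

lemma sum_range_add' (f : ℕ → ℕ) (a b : ℕ) :
    ∑ m ∈ Finset.range (a + b), f m
      = ∑ m ∈ Finset.range a, f m + ∑ m ∈ Finset.range b, f (a + m) := by
  induction b with
  | zero => simp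
  | succ n ih => rw [← Nat.add_assoc, Finset.sum_range_succ, Finset.sum_range_succ, ih, Nat.add_assoc]

/-! ### Covers -/

lemma GridCycle.mem_covers {C : GridCycle} {p : Pixel} : p ∈ C.covers ↔ ∃ i, C.pts i = p :=
  Set.mem_range

lemma GridCycle.pts_mem_covers (C : GridCycle) (i : ℤ) : C.pts i ∈ C.covers :=
  Set.mem_range_self i

lemma GridCycle.covers_nonempty (C : GridCycle) : C.covers.Nonempty :=
  ⟨C.pts 0, C.pts_mem_covers 0⟩

lemma GridCycle.covers_finite (C : GridCycle) : C.covers.Finite := by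
  apply Set.Finite.subset (((Finset.range C.k).finite_toSet).image (fun n : ℕ => C.pts n))
  rintro p ⟨i, rfl⟩
  have hk : (C.k : ℤ) ≠ 0 := by have := C.two_le; omega
  have h0 : (0:ℤ) ≤ i % C.k := Int.emod_nonneg i hk
  have h1 : i % C.k < C.k := Int.emod_lt_of_pos i C.k_pos
  refine ⟨(i % C.k).toNat, ?_, ?_⟩
  · simp only [Finset.coe_range, Set.mem_Iio]; omega
  · simp only [Int.toNat_of_nonneg h0]
    exact C.pts_emod i
/-! ### Reversed cycle -/

def GridCycle.rev (C : GridCycle) : GridCycle where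
  k := C.k
  two_le := C.two_le
  pts := fun i => C.pts (-i)
  periodic := by
    intro i
    show C.pts (-(i + (C.k:ℤ))) = C.pts (-i)
    rw [show -(i + (C.k:ℤ)) = (-i) - C.k from by ring, C.pts_sub_k]
  adj := by
    intro i
    have h := C.adj (-(i+1))
    rw [show -(i+1) + 1 = -i from by ring] at h
    exact adjacent_symm h

lemma GridCycle.rev_covers (C : GridCycle) : C.rev.covers = C.covers := by
  ext p
  constructor
  · rintro ⟨i, rfl⟩; exact ⟨-i, rfl⟩
  · rintro ⟨i, rfl⟩; exact ⟨-i, by simp [GridCycle.rev]⟩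

lemma GridCycle.rev_pts (C : GridCycle) (i : ℤ) : C.rev.pts i = C.pts (-i) := rfl

lemma GridCycle.rev_turnCost (C : GridCycle) (i : ℤ) :
    C.rev.turnCost i = C.turnCost (-i) := by
  rw [turnCost_eq_tc, turnCost_eq_tc, C.rev_pts, C.rev_pts, C.rev_pts]
  rw [show -(i-1) = -i+1 from by ring, show -(i+1) = -i-1 from by ring]
  rw [← tc_neg_rev (C.pts (-i) - C.pts (-i - 1)) (C.pts (-i+1) - C.pts (-i))]
  congr 1 <;> ring

lemma GridCycle.rev_turns (C : GridCycle) : C.rev.turns = C.turns := by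
  have h1 : C.rev.turns = ∑ i ∈ Finset.range C.k, C.turnCost (-(i:ℤ)) :=
    Finset.sum_congr rfl (fun i _ => C.rev_turnCost i)
  rw [h1, ← C.turns_window (-(C.k:ℤ) + 1), ← Finset.sum_range_reflect]
  apply Finset.sum_congr rfl
  intro j hj
  simp only [Finset.mem_range] at hj
  congr 1
  omega

/-! ### Splicing two cycles at a shared pixel -/

def splicePts (A B : GridCycle) (a0 b0 : ℤ) (m : ℤ) : Pixel :=
  if m % ((A.k : ℤ) + B.k) < A.k then A.pts (a0 + m % ((A.k:ℤ) + B.k))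
  else B.pts (b0 + (m % ((A.k:ℤ) + B.k) - A.k))

lemma splicePts_period (A B : GridCycle) (a0 b0 : ℤ) (i : ℤ) :
    splicePts A B a0 b0 (i + ((A.k:ℤ) + B.k)) = splicePts A B a0 b0 i := by
  unfold splicePts
  rw [show i + ((A.k:ℤ) + B.k) = i + ((A.k:ℤ) + B.k) * 1 from by ring,
    Int.add_mul_emod_self_left]

lemma splicePts_agree1 (A B : GridCycle) (a0 b0 : ℤ) (h : A.pts a0 = B.pts b0)
    (m : ℤ) (h0 : 0 ≤ m) (h1 : m ≤ A.k) :
    splicePts A B a0 b0 m = A.pts (a0 + m) := by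
  have hA := A.two_le; have hB := B.two_le
  unfold splicePts
  rcases lt_or_eq_of_le h1 with h2 | h2
  · rw [Int.emod_eq_of_lt h0 (by omega), if_pos h2]
  · subst h2
    rw [Int.emod_eq_of_lt h0 (by omega), if_neg (by omega), sub_self, add_zero,
      A.periodic a0]
    exact h.symm

lemma splicePts_agree2 (A B : GridCycle) (a0 b0 : ℤ) (h : A.pts a0 = B.pts b0)
    (m : ℤ) (h0 : 0 ≤ m) (h1 : m ≤ B.k) :
    splicePts A B a0 b0 ((A.k:ℤ) + m) = B.pts (b0 + m) := by
  have hA := A.two_le; have hB := B.two_le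
  unfold splicePts
  rcases lt_or_eq_of_le h1 with h2 | h2
  · rw [Int.emod_eq_of_lt (by omega) (by omega), if_neg (by omega)]
    congr 1; ring
  · subst h2
    rw [Int.emod_self, if_pos (by omega), add_zero, h, B.periodic b0]
lemma periodic_add_mul {α : Type*} (f : ℤ → α) (K : ℤ) (hf : ∀ i, f (i + K) = f i) :
    ∀ (i n : ℤ), f (i + n * K) = f i := by
  intro i n
  induction n using Int.induction_on with
  | zero => simp
  | succ m ih =>
      rw [show i + ((m:ℤ) + 1) * K = (i + m * K) + K from by ring, hf, ih]
  | pred m ih =>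
      have h2 := hf (i + (-(m:ℤ) - 1) * K)
      rw [show i + (-(m:ℤ) - 1) * K + K = i + (-(m:ℤ)) * K from by ring] at h2
      rw [← ih, ← h2]

lemma periodic_emod {α : Type*} (f : ℤ → α) (K : ℤ) (hK : 0 < K)
    (hf : ∀ i, f (i + K) = f i) (i : ℤ) : f (i % K) = f i := by
  conv_rhs => rw [show i = i % K + (i / K) * K from by rw [mul_comm]; exact (Int.emod_add_mul_ediv i K).symm]
  rw [periodic_add_mul f K hf]

def splice (A B : GridCycle) (a0 b0 : ℤ) (h : A.pts a0 = B.pts b0) : GridCycle where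
  k := A.k + B.k
  two_le := le_trans A.two_le (Nat.le_add_right _ _)
  pts := splicePts A B a0 b0
  periodic := by
    intro i
    rw [show ((A.k + B.k : ℕ) : ℤ) = (A.k:ℤ) + B.k from by push_cast; ring]
    exact splicePts_period A B a0 b0 i
  adj := by
    intro i
    have hA := A.two_le; have hB := B.two_le
    set K : ℤ := (A.k:ℤ) + B.k with hK
    have hKpos : 0 < K := by omega
    set r : ℤ := i % K with hr
    have h0 : 0 ≤ r := Int.emod_nonneg i (by omega)
    have h1 : r < K := Int.emod_lt_of_pos i hKpos
    have e1 : splicePts A B a0 b0 i = splicePts A B a0 b0 r :=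
      (periodic_emod _ K hKpos (splicePts_period A B a0 b0) i).symm
    have e2 : splicePts A B a0 b0 (i + 1) = splicePts A B a0 b0 (r + 1) := by
      have : i + 1 = (r + 1) + (i / K) * K := by
        rw [hr]; rw [Int.emod_def]; ring
      rw [this, periodic_add_mul _ K (splicePts_period A B a0 b0)]
    show Adjacent (splicePts A B a0 b0 i) (splicePts A B a0 b0 (i + 1))
    rw [e1, e2]
    rcases lt_or_ge r (A.k:ℤ) with h2 | h2
    · rw [splicePts_agree1 A B a0 b0 h r h0 (by omega),
        splicePts_agree1 A B a0 b0 h (r+1) (by omega) (by omega),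
        show a0 + (r+1) = (a0 + r) + 1 from by ring]
      exact A.adj (a0 + r)
    · have h3 : r = (A.k:ℤ) + (r - A.k) := by ring
      rw [h3, splicePts_agree2 A B a0 b0 h (r - A.k) (by omega) (by omega),
        show (A.k:ℤ) + (r - A.k) + 1 = (A.k:ℤ) + (r - A.k + 1) from by ring,
        splicePts_agree2 A B a0 b0 h (r - A.k + 1) (by omega) (by omega),
        show b0 + (r - A.k + 1) = (b0 + (r - A.k)) + 1 from by ring]
      exact B.adj (b0 + (r - A.k))

lemma splice_pts (A B : GridCycle) (a0 b0 : ℤ) (h : A.pts a0 = B.pts b0) (m : ℤ) :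
    (splice A B a0 b0 h).pts m = splicePts A B a0 b0 m := rfl

lemma splice_covers (A B : GridCycle) (a0 b0 : ℤ) (h : A.pts a0 = B.pts b0) :
    (splice A B a0 b0 h).covers = A.covers ∪ B.covers := by
  have hA := A.two_le; have hB := B.two_le
  ext p
  constructor
  · rintro ⟨i, rfl⟩
    rw [splice_pts]
    unfold splicePts
    split
    · exact Or.inl (A.pts_mem_covers _)
    · exact Or.inr (B.pts_mem_covers _)
  · rintro (⟨x, rfl⟩ | ⟨x, rfl⟩)
    · refine ⟨(x - a0) % A.k, ?_⟩
      have h0 : 0 ≤ (x - a0) % A.k := Int.emod_nonneg _ (by omega)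
      have h1 : (x - a0) % A.k < A.k := Int.emod_lt_of_pos _ (by omega)
      rw [splice_pts, splicePts_agree1 A B a0 b0 h _ h0 (by omega)]
      have : a0 + (x - a0) % A.k = x + (-((x - a0) / A.k)) * A.k := by
        rw [Int.emod_def]; ring
      rw [this, periodic_add_mul A.pts A.k (fun i => A.periodic i)]
    · refine ⟨(A.k:ℤ) + (x - b0) % B.k, ?_⟩
      have h0 : 0 ≤ (x - b0) % B.k := Int.emod_nonneg _ (by omega)
      have h1 : (x - b0) % B.k < B.k := Int.emod_lt_of_pos _ (by omega)
      rw [splice_pts, splicePts_agree2 A B a0 b0 h _ h0 (by omega)]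
      have : b0 + (x - b0) % B.k = x + (-((x - b0) / B.k)) * B.k := by
        rw [Int.emod_def]; ring
      rw [this, periodic_add_mul B.pts B.k (fun i => B.periodic i)]
lemma splice_turns (A B : GridCycle) (a0 b0 : ℤ) (h : A.pts a0 = B.pts b0) :
    (splice A B a0 b0 h).turns + A.turnCost a0 + B.turnCost b0
      = A.turns + B.turns
        + tc (B.pts b0 - B.pts (b0-1)) (A.pts (a0+1) - A.pts a0)
        + tc (A.pts a0 - A.pts (a0-1)) (B.pts (b0+1) - B.pts b0) := by
  have hA := A.two_le; have hB := B.two_le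
  set D := splice A B a0 b0 h with hD
  have ag1 : ∀ m : ℤ, 0 ≤ m → m ≤ A.k → D.pts m = A.pts (a0 + m) := fun m h0 h1 =>
    splicePts_agree1 A B a0 b0 h m h0 h1
  have ag2 : ∀ m : ℤ, 0 ≤ m → m ≤ B.k → D.pts ((A.k:ℤ) + m) = B.pts (b0 + m) := fun m h0 h1 =>
    splicePts_agree2 A B a0 b0 h m h0 h1
  have hDk : D.k = A.k + B.k := rfl
  have hm1 : D.pts (-1) = B.pts (b0 - 1) := by
    have e : D.pts (-1) = D.pts (-1 + D.k) := (D.periodic (-1)).symm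
    rw [e, hDk, show (-1 : ℤ) + ((A.k + B.k : ℕ):ℤ) = (A.k:ℤ) + ((B.k:ℤ) - 1) from by push_cast; ring,
      ag2 _ (by omega) (by omega),
      show b0 + ((B.k:ℤ)-1) = (b0 - 1) + B.k from by ring, B.periodic]
  have hb0 : D.turnCost 0 = tc (B.pts b0 - B.pts (b0-1)) (A.pts (a0+1) - A.pts a0) := by
    rw [turnCost_eq_tc, show (0:ℤ)-1 = -1 from by ring, hm1,
      show (0:ℤ)+1 = 1 from by ring,
      ag1 1 (by omega) (by omega), ag1 0 (by omega) (by omega), add_zero, h]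
  have hb1 : D.turnCost (A.k:ℤ)
      = tc (A.pts a0 - A.pts (a0-1)) (B.pts (b0+1) - B.pts b0) := by
    rw [turnCost_eq_tc]
    rw [show (A.k:ℤ) - 1 = ((A.k:ℤ) - 1) from rfl]
    have e1 : D.pts ((A.k:ℤ) - 1) = A.pts (a0 - 1) := by
      rw [ag1 _ (by omega) (by omega),
        show a0 + ((A.k:ℤ) - 1) = (a0 - 1) + A.k from by ring, A.periodic]
    have e2 : D.pts (A.k:ℤ) = B.pts b0 := by
      rw [show (A.k:ℤ) = (A.k:ℤ) + 0 from by ring, ag2 0 (by omega) (by omega), add_zero]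
    have e3 : D.pts ((A.k:ℤ) + 1) = B.pts (b0 + 1) := ag2 1 (by omega) (by omega)
    rw [e1, e2, e3, ← h]
  have int1 : ∀ m : ℕ, m + 2 ≤ A.k → D.turnCost ((m:ℤ)+1) = A.turnCost (a0 + ((m:ℤ)+1)) := by
    intro m hm
    rw [turnCost_eq_tc, turnCost_eq_tc]
    rw [show ((m:ℤ)+1) - 1 = (m:ℤ) from by ring]
    rw [ag1 m (by omega) (by omega), ag1 ((m:ℤ)+1) (by omega) (by omega),
      ag1 ((m:ℤ)+1+1) (by omega) (by omega)]
    congr 2 <;> ring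
  have int2 : ∀ m : ℕ, m + 2 ≤ B.k →
      D.turnCost ((A.k:ℤ) + ((m:ℤ)+1)) = B.turnCost (b0 + ((m:ℤ)+1)) := by
    intro m hm
    rw [turnCost_eq_tc, turnCost_eq_tc]
    rw [show ((A.k:ℤ) + ((m:ℤ)+1)) - 1 = (A.k:ℤ) + (m:ℤ) from by ring,
      show ((A.k:ℤ) + ((m:ℤ)+1)) + 1 = (A.k:ℤ) + ((m:ℤ)+1+1) from by ring]
    rw [ag2 m (by omega) (by omega), ag2 ((m:ℤ)+1) (by omega) (by omega),
      ag2 ((m:ℤ)+1+1) (by omega) (by omega)]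
    congr 2 <;> ring
  have hsum : D.turns = ∑ m ∈ Finset.range A.k, D.turnCost (m:ℤ)
      + ∑ m ∈ Finset.range B.k, D.turnCost ((A.k:ℤ) + (m:ℤ)) := by
    rw [GridCycle.turns, hDk, sum_range_add']
    congr 1
  obtain ⟨a', ha'⟩ : ∃ a', A.k = a' + 1 := ⟨A.k - 1, by omega⟩
  obtain ⟨b', hb'⟩ : ∃ b', B.k = b' + 1 := ⟨B.k - 1, by omega⟩
  have block1 : ∑ m ∈ Finset.range A.k, D.turnCost (m:ℤ) + A.turnCost a0
      = A.turns + D.turnCost 0 := by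
    rw [← A.turns_window a0, ha', Finset.sum_range_succ', Finset.sum_range_succ']
    have e : ∀ m ∈ Finset.range a', D.turnCost ((m+1 : ℕ):ℤ) = A.turnCost (a0 + ((m+1:ℕ):ℤ)) := by
      intro m hm
      simp only [Finset.mem_range] at hm
      have := int1 m (by omega)
      rw [show (((m+1:ℕ)):ℤ) = (m:ℤ)+1 from by push_cast; ring]
      exact this
    rw [Finset.sum_congr rfl e]
    simp only [Nat.cast_zero, add_zero, Nat.cast_ofNat]
    ring
  have block2 : ∑ m ∈ Finset.range B.k, D.turnCost ((A.k:ℤ) + (m:ℤ)) + B.turnCost b0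
      = B.turns + D.turnCost (A.k:ℤ) := by
    rw [← B.turns_window b0, hb', Finset.sum_range_succ', Finset.sum_range_succ']
    have e : ∀ m ∈ Finset.range b',
        D.turnCost ((A.k:ℤ) + ((m+1:ℕ):ℤ)) = B.turnCost (b0 + ((m+1:ℕ):ℤ)) := by
      intro m hm
      simp only [Finset.mem_range] at hm
      have := int2 m (by omega)
      rw [show (((m+1:ℕ)):ℤ) = (m:ℤ)+1 from by push_cast; ring]
      exact this
    rw [Finset.sum_congr rfl e]
    simp only [Nat.cast_zero, add_zero, Nat.cast_ofNat]
    ring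
  rw [← hb0, ← hb1]
  omega
/-! ### Extension: prepend a bridge pixel to a cycle -/

def extPts (B : GridCycle) (j0 : ℤ) (p : Pixel) (m : ℤ) : Pixel :=
  if m % ((B.k:ℤ) + 2) = 0 then p else B.pts (j0 + m % ((B.k:ℤ) + 2) - 1)

lemma extPts_period (B : GridCycle) (j0 : ℤ) (p : Pixel) (i : ℤ) :
    extPts B j0 p (i + ((B.k:ℤ) + 2)) = extPts B j0 p i := by
  unfold extPts
  rw [show i + ((B.k:ℤ) + 2) = i + ((B.k:ℤ) + 2) * 1 from by ring,
    Int.add_mul_emod_self_left]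

lemma extPts_zero (B : GridCycle) (j0 : ℤ) (p : Pixel) : extPts B j0 p 0 = p := by
  have hB := B.two_le
  unfold extPts
  rw [Int.emod_eq_of_lt (by omega) (by omega)]
  simp

lemma extPts_agree (B : GridCycle) (j0 : ℤ) (p : Pixel) (m : ℤ)
    (h1 : 1 ≤ m) (h2 : m ≤ (B.k:ℤ) + 1) :
    extPts B j0 p m = B.pts (j0 + m - 1) := by
  have hB := B.two_le
  unfold extPts
  rw [Int.emod_eq_of_lt (by omega) (by omega), if_neg (by omega)]

def extend (B : GridCycle) (j0 : ℤ) (p : Pixel) (hadj : Adjacent p (B.pts j0)) : GridCycle where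
  k := B.k + 2
  two_le := by omega
  pts := extPts B j0 p
  periodic := by
    intro i
    rw [show ((B.k + 2 : ℕ) : ℤ) = (B.k:ℤ) + 2 from by push_cast; ring]
    exact extPts_period B j0 p i
  adj := by
    intro i
    have hB := B.two_le
    set K : ℤ := (B.k:ℤ) + 2
    have hKpos : 0 < K := by omega
    set r : ℤ := i % K with hr
    have h0 : 0 ≤ r := Int.emod_nonneg i (by omega)
    have h1 : r < K := Int.emod_lt_of_pos i hKpos
    have e1 : extPts B j0 p i = extPts B j0 p r :=
      (periodic_emod _ K hKpos (extPts_period B j0 p) i).symm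
    have e2 : extPts B j0 p (i + 1) = extPts B j0 p (r + 1) := by
      have e : i + 1 = (r + 1) + (i / K) * K := by rw [hr, Int.emod_def]; ring
      rw [e, periodic_add_mul _ K (extPts_period B j0 p)]
    show Adjacent (extPts B j0 p i) (extPts B j0 p (i + 1))
    rw [e1, e2]
    rcases eq_or_lt_of_le h0 with h2 | h2
    · rw [← h2, extPts_zero, show (0:ℤ) + 1 = 1 from by ring,
        extPts_agree B j0 p 1 (by omega) (by omega)]
      rw [show j0 + 1 - 1 = j0 from by ring]
      exact hadj
    · rcases lt_or_eq_of_le (show r + 1 ≤ K from by omega) with h3 | h3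
      · rw [extPts_agree B j0 p r (by omega) (by omega),
          extPts_agree B j0 p (r+1) (by omega) (by omega),
          show j0 + (r+1) - 1 = (j0 + r - 1) + 1 from by ring]
        exact B.adj (j0 + r - 1)
      · rw [extPts_agree B j0 p r (by omega) (by omega), h3]
        have e : extPts B j0 p K = p := by
          have hp := extPts_period B j0 p 0
          rw [zero_add] at hp
          rw [show K = (B.k:ℤ) + 2 from rfl, hp, extPts_zero]
        rw [e, show j0 + r - 1 = j0 + B.k from by omega,
          show j0 + (B.k:ℤ) = j0 + B.k from rfl, B.periodic j0]
        exact adjacent_symm hadj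

lemma extend_pts (B : GridCycle) (j0 : ℤ) (p : Pixel) (hadj : Adjacent p (B.pts j0)) (m : ℤ) :
    (extend B j0 p hadj).pts m = extPts B j0 p m := rfl

lemma extend_covers (B : GridCycle) (j0 : ℤ) (p : Pixel) (hadj : Adjacent p (B.pts j0)) :
    (extend B j0 p hadj).covers = insert p B.covers := by
  have hB := B.two_le
  ext x
  constructor
  · rintro ⟨i, rfl⟩
    rw [extend_pts]
    unfold extPts
    split
    · exact Or.inl rfl
    · exact Or.inr (B.pts_mem_covers _)
  · rintro (rfl | ⟨y, rfl⟩)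
    · exact ⟨0, extPts_zero B j0 _⟩
    · refine ⟨1 + (y - j0) % B.k, ?_⟩
      have h0 : 0 ≤ (y - j0) % B.k := Int.emod_nonneg _ (by omega)
      have h1 : (y - j0) % B.k < B.k := Int.emod_lt_of_pos _ (by omega)
      rw [extend_pts, extPts_agree B j0 p _ (by omega) (by omega)]
      have e : j0 + (1 + (y - j0) % B.k) - 1 = y + (-((y - j0) / B.k)) * B.k := by
        rw [Int.emod_def]; ring
      rw [e, periodic_add_mul B.pts B.k (fun i => B.periodic i)]

set_option maxHeartbeats 1000000 in
lemma extend_turns (B : GridCycle) (j0 : ℤ) (p : Pixel) (hadj : Adjacent p (B.pts j0)) :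
    (extend B j0 p hadj).turns + B.turnCost j0
      = B.turns + 2
        + tc (B.pts j0 - p) (B.pts (j0+1) - B.pts j0)
        + tc (B.pts j0 - B.pts (j0-1)) (p - B.pts j0) := by
  have hB := B.two_le
  set E := extend B j0 p hadj with hE
  have hEk : E.k = B.k + 2 := rfl
  have hne : p ≠ B.pts j0 := by
    intro h
    rw [adjacent_iff_unit] at hadj
    rw [← h] at hadj
    unfold UnitDir at hadj
    simp at hadj
  -- point values
  have e0 : E.pts 0 = p := extPts_zero B j0 p
  have e1 : E.pts 1 = B.pts j0 := by
    rw [extend_pts, extPts_agree B j0 p 1 (by omega) (by omega),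
      show j0 + 1 - 1 = j0 from by ring]
  have em1 : E.pts (-1) = B.pts j0 := by
    have e : E.pts (-1) = E.pts (-1 + E.k) := (E.periodic (-1)).symm
    rw [e, hEk, show (-1:ℤ) + ((B.k + 2 : ℕ):ℤ) = (B.k:ℤ) + 1 from by push_cast; ring,
      extend_pts, extPts_agree B j0 p _ (by omega) (by omega),
      show j0 + ((B.k:ℤ) + 1) - 1 = j0 + B.k from by ring, B.periodic]
  have elast : E.pts ((B.k:ℤ) + 1) = B.pts j0 := by
    rw [extend_pts, extPts_agree B j0 p _ (by omega) (by omega),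
      show j0 + ((B.k:ℤ) + 1) - 1 = j0 + B.k from by ring, B.periodic]
  have eBk : E.pts (B.k:ℤ) = B.pts (j0 - 1) := by
    rw [extend_pts, extPts_agree B j0 p _ (by omega) (by omega),
      show j0 + (B.k:ℤ) - 1 = (j0 - 1) + B.k from by ring, B.periodic]
  have eK : E.pts ((B.k:ℤ) + 2) = p := by
    have hp := E.periodic 0
    rw [hEk] at hp
    rw [show ((B.k:ℤ) + 2) = 0 + ((B.k + 2:ℕ):ℤ) from by push_cast; ring, hp, e0]
  -- boundary costs
  have c0 : E.turnCost 0 = 2 := by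
    rw [turnCost_eq_tc, show (0:ℤ) - 1 = -1 from by ring, em1,
      show (0:ℤ) + 1 = 1 from by ring, e1, e0]
    have hcond : ¬ (B.pts j0 - p = p - B.pts j0) := by
      intro hc
      apply hne
      have h1 := congrArg Prod.fst hc
      have h2 := congrArg Prod.snd hc
      simp only [Prod.fst_sub, Prod.snd_sub] at h1 h2
      have h3 : p.1 = (B.pts j0).1 ∧ p.2 = (B.pts j0).2 := by omega
      exact Prod.ext h3.1 h3.2
    unfold tc
    rw [if_neg hcond, if_pos (show B.pts j0 - p = -(p - B.pts j0) from by ring)]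
  have c1 : E.turnCost 1 = tc (B.pts j0 - p) (B.pts (j0+1) - B.pts j0) := by
    rw [turnCost_eq_tc, show (1:ℤ) - 1 = 0 from by ring, e0,
      show (1:ℤ) + 1 = 2 from by ring, e1]
    rw [extend_pts, extPts_agree B j0 p 2 (by omega) (by omega),
      show j0 + 2 - 1 = j0 + 1 from by ring]
  have clast : E.turnCost ((B.k:ℤ) + 1)
      = tc (B.pts j0 - B.pts (j0-1)) (p - B.pts j0) := by
    rw [turnCost_eq_tc, show (B.k:ℤ) + 1 - 1 = (B.k:ℤ) from by ring, eBk, elast,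
      show (B.k:ℤ) + 1 + 1 = (B.k:ℤ) + 2 from by ring, eK]
  have int : ∀ m : ℕ, m + 2 ≤ B.k →
      E.turnCost ((m:ℤ) + 2) = B.turnCost (j0 + ((m:ℤ) + 1)) := by
    intro m hm
    rw [turnCost_eq_tc, turnCost_eq_tc]
    rw [show ((m:ℤ) + 2) - 1 = (m:ℤ) + 1 from by ring]
    rw [extend_pts, extend_pts, extend_pts,
      extPts_agree B j0 p ((m:ℤ)+1) (by omega) (by omega),
      extPts_agree B j0 p ((m:ℤ)+2) (by omega) (by omega),
      extPts_agree B j0 p ((m:ℤ)+2+1) (by omega) (by omega)]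
    congr 2 <;> ring
  -- sum assembly
  obtain ⟨b', hb'⟩ : ∃ b', B.k = b' + 1 := ⟨B.k - 1, by omega⟩
  have hsum : E.turns = ∑ m ∈ Finset.range (B.k + 2), E.turnCost (m:ℤ) := rfl
  have step1 : E.turns
      = ∑ m ∈ Finset.range (B.k + 1), E.turnCost ((m:ℤ) + 1) + E.turnCost 0 := by
    rw [hsum, Finset.sum_range_succ']
    push_cast
    ring_nf
  have step2 : ∑ m ∈ Finset.range (B.k + 1), E.turnCost ((m:ℤ) + 1)
      = ∑ m ∈ Finset.range B.k, E.turnCost ((m:ℤ) + 2) + E.turnCost 1 := by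
    rw [Finset.sum_range_succ']
    push_cast
    ring_nf
  have step3 : ∑ m ∈ Finset.range B.k, E.turnCost ((m:ℤ) + 2)
      = ∑ m ∈ Finset.range b', E.turnCost ((m:ℤ) + 2) + E.turnCost ((B.k:ℤ) + 1) := by
    rw [hb', Finset.sum_range_succ]
    push_cast
    ring_nf
    try rfl
    try
      rw [show ((b':ℤ) + 1 + 1) = (b':ℤ) + 2 from by ring]
      rw [Finset.sum_congr rfl (fun x _ => by rw [add_comm] :
        ∀ x ∈ Finset.range b', E.turnCost (2 + (x:ℤ)) = E.turnCost ((x:ℤ) + 2))]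
  have step4 : ∑ m ∈ Finset.range b', E.turnCost ((m:ℤ) + 2) + B.turnCost j0
      = B.turns := by
    rw [← B.turns_window j0, hb', Finset.sum_range_succ']
    have e : ∀ m ∈ Finset.range b', E.turnCost ((m:ℤ) + 2) = B.turnCost (j0 + ((m+1:ℕ):ℤ)) := by
      intro m hm
      simp only [Finset.mem_range] at hm
      rw [show (((m+1:ℕ)):ℤ) = (m:ℤ)+1 from by push_cast; ring]
      exact int m (by omega)
    rw [Finset.sum_congr rfl e]
    push_cast
    ring_nf
  rw [step1, step2, step3, c0, c1, clast]
  omega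
/-! ### Direction case analysis -/

lemma tc_shared_bound {u u' v v' : Pixel} (hu : UnitDir u) (hu' : UnitDir u')
    (hv : UnitDir v) (hv' : UnitDir v') :
    tc v u' + tc u v' ≤ tc u u' + tc v v' + 2 ∨
    tc (-v') u' + tc u (-v) ≤ tc u u' + tc v v' + 2 := by
  rcases unitDir_cases hu with rfl|rfl|rfl|rfl <;>
    rcases unitDir_cases hu' with rfl|rfl|rfl|rfl <;>
    rcases unitDir_cases hv with rfl|rfl|rfl|rfl <;>
    rcases unitDir_cases hv' with rfl|rfl|rfl|rfl <;> decide

lemma tc_bridge_bound {u u' v v' w : Pixel} (hu : UnitDir u) (hu' : UnitDir u')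
    (hv : UnitDir v) (hv' : UnitDir v') (hw : UnitDir w)
    (h1 : u ≠ -w) (h2 : u' ≠ w) (h3 : v ≠ w) (h4 : v' ≠ -w)
    (h5 : u' ≠ u ∨ v' ≠ v) :
    tc (-w) u' + tc u w + tc w v' + tc v (-w) ≤ tc u u' + tc v v' + 2 := by
  rcases unitDir_cases hu with rfl|rfl|rfl|rfl <;>
    rcases unitDir_cases hu' with rfl|rfl|rfl|rfl <;>
    rcases unitDir_cases hv with rfl|rfl|rfl|rfl <;>
    rcases unitDir_cases hv' with rfl|rfl|rfl|rfl <;>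
    rcases unitDir_cases hw with rfl|rfl|rfl|rfl <;>
    revert h1 h2 h3 h4 h5 <;> decide

lemma unit_perp {u w : Pixel} (hu : UnitDir u) (hw : UnitDir w)
    (h1 : u ≠ w) (h2 : u ≠ -w) : u = (w.2, w.1) ∨ u = -(w.2, w.1) := by
  rcases unitDir_cases hu with rfl|rfl|rfl|rfl <;>
    rcases unitDir_cases hw with rfl|rfl|rfl|rfl <;>
    revert h1 h2 <;> decide
/-! ### Extra extension point lemmas -/

lemma extend_pts_zero (B : GridCycle) (j0 : ℤ) (p : Pixel) (hadj : Adjacent p (B.pts j0)) :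
    (extend B j0 p hadj).pts 0 = p := extPts_zero B j0 p

lemma extend_pts_one (B : GridCycle) (j0 : ℤ) (p : Pixel) (hadj : Adjacent p (B.pts j0)) :
    (extend B j0 p hadj).pts 1 = B.pts j0 := by
  have hB := B.two_le
  rw [extend_pts, extPts_agree B j0 p 1 (by omega) (by omega),
    show j0 + 1 - 1 = j0 from by ring]

lemma extend_pts_neg_one (B : GridCycle) (j0 : ℤ) (p : Pixel) (hadj : Adjacent p (B.pts j0)) :
    (extend B j0 p hadj).pts (-1) = B.pts j0 := by
  have hB := B.two_le
  set E := extend B j0 p hadj with hE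
  have hEk : E.k = B.k + 2 := rfl
  have e : E.pts (-1) = E.pts (-1 + E.k) := (E.periodic (-1)).symm
  rw [e, hEk, show (-1:ℤ) + ((B.k + 2 : ℕ):ℤ) = (B.k:ℤ) + 1 from by push_cast; ring,
    hE, extend_pts, extPts_agree B j0 p _ (by omega) (by omega),
    show j0 + ((B.k:ℤ) + 1) - 1 = j0 + B.k from by ring, B.periodic]

lemma pixel_ne_of_adjacent {p q : Pixel} (hadj : Adjacent p q) : p ≠ q := by
  intro h
  rw [adjacent_iff_unit, ← h] at hadj
  unfold UnitDir at hadj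
  simp at hadj

lemma extend_turnCost_zero (B : GridCycle) (j0 : ℤ) (p : Pixel)
    (hadj : Adjacent p (B.pts j0)) :
    (extend B j0 p hadj).turnCost 0 = 2 := by
  have hne : p ≠ B.pts j0 := pixel_ne_of_adjacent hadj
  rw [turnCost_eq_tc, show (0:ℤ) - 1 = -1 from by ring, extend_pts_neg_one,
    show (0:ℤ) + 1 = 1 from by ring, extend_pts_one, extend_pts_zero]
  have hcond : ¬ (B.pts j0 - p = p - B.pts j0) := by
    intro hc
    apply hne
    have h1 := congrArg Prod.fst hc
    have h2 := congrArg Prod.snd hc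
    simp only [Prod.fst_sub, Prod.snd_sub] at h1 h2
    have h3 : p.1 = (B.pts j0).1 ∧ p.2 = (B.pts j0).2 := by omega
    exact Prod.ext h3.1 h3.2
  unfold tc
  rw [if_neg hcond, if_pos (show B.pts j0 - p = -(p - B.pts j0) from by ring)]

/-! ### Merging two cycles sharing a pixel -/

lemma merge_shared (C1 C2 : GridCycle) {p : Pixel}
    (h1 : p ∈ C1.covers) (h2 : p ∈ C2.covers) :
    ∃ D : GridCycle, D.covers = C1.covers ∪ C2.covers ∧
      D.turns ≤ C1.turns + C2.turns + 2 := by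
  obtain ⟨i0, hi0⟩ := h1
  obtain ⟨j0, hj0⟩ := h2
  have hsh : C1.pts i0 = C2.pts j0 := by rw [hi0, hj0]
  rcases tc_shared_bound (unitDir_in C1 i0) (unitDir_out C1 i0)
      (unitDir_in C2 j0) (unitDir_out C2 j0) with hb | hb
  · refine ⟨splice C1 C2 i0 j0 hsh, splice_covers C1 C2 i0 j0 hsh, ?_⟩
    have heq := splice_turns C1 C2 i0 j0 hsh
    rw [turnCost_eq_tc C1 i0, turnCost_eq_tc C2 j0] at heq
    omega
  · have hsh' : C1.pts i0 = C2.rev.pts (-j0) := by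
      rw [C2.rev_pts, neg_neg, hsh]
    refine ⟨splice C1 C2.rev i0 (-j0) hsh', ?_, ?_⟩
    · rw [splice_covers, C2.rev_covers]
    · have heq := splice_turns C1 C2.rev i0 (-j0) hsh'
      have e1 : C2.rev.pts (-j0) = C2.pts j0 := by rw [C2.rev_pts, neg_neg]
      have e2 : C2.rev.pts (-j0 - 1) = C2.pts (j0 + 1) := by
        rw [C2.rev_pts, show -(-j0 - 1) = j0 + 1 from by ring]
      have e3 : C2.rev.pts (-j0 + 1) = C2.pts (j0 - 1) := by
        rw [C2.rev_pts, show -(-j0 + 1) = j0 - 1 from by ring]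
      have e4 : C2.rev.turnCost (-j0) = C2.turnCost j0 := by
        rw [C2.rev_turnCost, neg_neg]
      rw [e4, C2.rev_turns, e1, e2, e3, turnCost_eq_tc C1 i0, turnCost_eq_tc C2 j0,
        show C2.pts j0 - C2.pts (j0+1) = -(C2.pts (j0+1) - C2.pts j0) from by ring,
        show C2.pts (j0-1) - C2.pts j0 = -(C2.pts j0 - C2.pts (j0-1)) from by ring] at heq
      omega

/-! ### Merging two adjacent disjoint cycles at a good junction -/

lemma merge_bridge_at (C1 C2 : GridCycle)
    (hdisj : ∀ x, x ∈ C1.covers → x ∉ C2.covers) (i0 j0 : ℤ)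
    (hadj' : Adjacent (C1.pts i0) (C2.pts j0))
    (hns : C1.pts (i0+1) - C1.pts i0 ≠ C1.pts i0 - C1.pts (i0-1) ∨
           C2.pts (j0+1) - C2.pts j0 ≠ C2.pts j0 - C2.pts (j0-1)) :
    ∃ D : GridCycle, D.covers = C1.covers ∪ C2.covers ∧
      D.turns ≤ C1.turns + C2.turns + 2 := by
  set p := C1.pts i0 with hp
  set q := C2.pts j0 with hq
  set w := q - p with hw
  set u := C1.pts i0 - C1.pts (i0 - 1) with hu
  set u' := C1.pts (i0 + 1) - C1.pts i0 with hu'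
  set v := C2.pts j0 - C2.pts (j0 - 1) with hv
  set v' := C2.pts (j0 + 1) - C2.pts j0 with hv'
  have hpc : p ∈ C1.covers := C1.pts_mem_covers i0
  have hqc : q ∈ C2.covers := C2.pts_mem_covers j0
  -- direction constraints
  have hd1 : u ≠ -w := by
    intro h
    have e : C1.pts (i0 - 1) = q := by
      have e2 : C1.pts (i0 - 1) = C1.pts i0 - u := by rw [hu]; ring
      rw [e2, h, hw, hp]; ring
    exact hdisj q (e ▸ C1.pts_mem_covers (i0 - 1)) hqc
  have hd2 : u' ≠ w := by
    intro h
    have e : C1.pts (i0 + 1) = q := by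
      have e2 : C1.pts (i0 + 1) = C1.pts i0 + u' := by rw [hu']; ring
      rw [e2, h, hw, ← hp]; ring
    exact hdisj q (e ▸ C1.pts_mem_covers (i0 + 1)) hqc
  have hd3 : v ≠ w := by
    intro h
    have e : C2.pts (j0 - 1) = p := by
      have e2 : C2.pts (j0 - 1) = C2.pts j0 - v := by rw [hv]; ring
      rw [e2, h, hw, ← hq]; ring
    exact hdisj p hpc (e ▸ C2.pts_mem_covers (j0 - 1))
  have hd4 : v' ≠ -w := by
    intro h
    have e : C2.pts (j0 + 1) = p := by
      have e2 : C2.pts (j0 + 1) = C2.pts j0 + v' := by rw [hv']; ring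
      rw [e2, h, hw, ← hq]; ring
    exact hdisj p hpc (e ▸ C2.pts_mem_covers (j0 + 1))
  have hbound : tc (-w) u' + tc u w + tc w v' + tc v (-w) ≤ tc u u' + tc v v' + 2 :=
    tc_bridge_bound (unitDir_in C1 i0) (unitDir_out C1 i0)
      (unitDir_in C2 j0) (unitDir_out C2 j0)
      (by rw [hw]; exact (adjacent_iff_unit.mp hadj')) hd1 hd2 hd3 hd4 hns
  -- construction
  set E := extend C2 j0 p hadj' with hE
  have hsh : C1.pts i0 = E.pts 0 := by rw [hE, extend_pts_zero]
  refine ⟨splice C1 E i0 0 hsh, ?_, ?_⟩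
  · rw [splice_covers, hE, extend_covers]
    ext x
    simp only [Set.mem_union, Set.mem_insert_iff]
    constructor
    · rintro (h | rfl | h)
      · exact Or.inl h
      · exact Or.inl hpc
      · exact Or.inr h
    · rintro (h | h)
      · exact Or.inl h
      · exact Or.inr (Or.inr h)
  · have heq1 := splice_turns C1 E i0 0 hsh
    have e0 : E.pts 0 = p := by rw [hE, extend_pts_zero]
    have em1 : E.pts (0 - 1) = q := by
      rw [show (0:ℤ) - 1 = -1 from by ring, hE, extend_pts_neg_one]
    have e1 : E.pts (0 + 1) = q := by
      rw [show (0:ℤ) + 1 = 1 from by ring, hE, extend_pts_one]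
    have ec0 : E.turnCost 0 = 2 := by rw [hE]; exact extend_turnCost_zero C2 j0 p hadj'
    rw [turnCost_eq_tc C1 i0, ec0, e0, em1, e1] at heq1
    -- heq1 : D.turns + tc u u' + 2 = C1.turns + E.turns + tc (p - q) u' + tc u (q - p)
    have heq2 := extend_turns C2 j0 p hadj'
    rw [turnCost_eq_tc C2 j0] at heq2
    rw [show p - q = -w from by rw [hw]; ring] at heq1
    rw [show (C2.pts j0 - p) = w from by rw [hw, hq]] at heq2
    rw [← hu, ← hu', ← hw] at heq1
    rw [show p - q = -w from by rw [hw]; ring] at heq2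
    rw [← hE, ← hv, ← hv'] at heq2
    omega
/-! ### Merging two adjacent disjoint cycles -/

lemma merge_bridge (C1 C2 : GridCycle)
    (hdisj : ∀ x, x ∈ C1.covers → x ∉ C2.covers)
    {p q : Pixel} (hp : p ∈ C1.covers) (hq : q ∈ C2.covers) (hadj : Adjacent p q) :
    ∃ D : GridCycle, D.covers = C1.covers ∪ C2.covers ∧
      D.turns ≤ C1.turns + C2.turns + 2 := by
  by_cases H : ∃ p' q' : Pixel, p' ∈ C1.covers ∧ q' ∈ C2.covers ∧ q' - p' = q - p ∧
      ((∃ i, C1.pts i = p' ∧ C1.pts (i+1) - C1.pts i ≠ C1.pts i - C1.pts (i-1)) ∨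
       (∃ j, C2.pts j = q' ∧ C2.pts (j+1) - C2.pts j ≠ C2.pts j - C2.pts (j-1)))
  · obtain ⟨p', q', hp', hq', hdiff, hcase⟩ := H
    have hadj2 : Adjacent p' q' := adjacent_of_diff hadj hdiff
    rcases hcase with ⟨i0, hi0, hns⟩ | ⟨j0, hj0, hns⟩
    · obtain ⟨j0, hj0⟩ := hq'
      exact merge_bridge_at C1 C2 hdisj i0 j0 (by rw [hi0, hj0]; exact hadj2) (Or.inl hns)
    · obtain ⟨i0, hi0⟩ := hp'
      exact merge_bridge_at C1 C2 hdisj i0 j0 (by rw [hi0, hj0]; exact hadj2) (Or.inr hns)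
  · exfalso
    have Hall : ∀ p' q' : Pixel, p' ∈ C1.covers → q' ∈ C2.covers → q' - p' = q - p →
        (∀ i, C1.pts i = p' → C1.pts (i+1) - C1.pts i = C1.pts i - C1.pts (i-1)) ∧
        (∀ j, C2.pts j = q' → C2.pts (j+1) - C2.pts j = C2.pts j - C2.pts (j-1)) := by
      intro p' q' h1 h2 h3
      constructor
      · intro i hi
        by_contra hns
        exact H ⟨p', q', h1, h2, h3, Or.inl ⟨i, hi, hns⟩⟩
      · intro j hj
        by_contra hns
        exact H ⟨p', q', h1, h2, h3, Or.inr ⟨j, hj, hns⟩⟩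
    set w : Pixel := q - p with hw
    have hwu : UnitDir w := adjacent_iff_unit.mp hadj
    set s : Pixel := (w.2, w.1) with hs
    have step : ∀ p' q' : Pixel, p' ∈ C1.covers → q' ∈ C2.covers → q' - p' = w →
        (p' + s) ∈ C1.covers ∧ (q' + s) ∈ C2.covers := by
      intro p' q' h1 h2 h3
      obtain ⟨hall1, hall2⟩ := Hall p' q' h1 h2 h3
      have hq'p' : q' = p' + w := by rw [← h3]; ring
      obtain ⟨i, hi⟩ := h1
      obtain ⟨j, hj⟩ := h2
      constructor
      · have hst := hall1 i hi
        have hu : UnitDir (C1.pts i - C1.pts (i-1)) := unitDir_in C1 i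
        have hne1 : C1.pts i - C1.pts (i-1) ≠ w := by
          intro h
          apply hdisj q' ?_ ⟨j, hj⟩
          have e : C1.pts (i+1) = q' := by
            have e2 : C1.pts (i+1) = C1.pts i + (C1.pts i - C1.pts (i-1)) := by
              rw [← hst]; ring
            rw [e2, h, hi, hq'p']
          exact e ▸ C1.pts_mem_covers (i+1)
        have hne2 : C1.pts i - C1.pts (i-1) ≠ -w := by
          intro h
          apply hdisj q' ?_ ⟨j, hj⟩
          have e : C1.pts (i-1) = q' := by
            have e2 : C1.pts (i-1) = C1.pts i - (C1.pts i - C1.pts (i-1)) := by ring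
            rw [e2, h, hi, hq'p']; ring
          exact e ▸ C1.pts_mem_covers (i-1)
        rcases unit_perp hu hwu hne1 hne2 with h | h
        · refine ⟨i+1, ?_⟩
          have e2 : C1.pts (i+1) = C1.pts i + (C1.pts i - C1.pts (i-1)) := by
            rw [← hst]; ring
          rw [e2, h, hi, hs]
        · refine ⟨i-1, ?_⟩
          have e2 : C1.pts (i-1) = C1.pts i - (C1.pts i - C1.pts (i-1)) := by ring
          rw [e2, h, hi, hs]; ring
      · have hst := hall2 j hj
        have hv : UnitDir (C2.pts j - C2.pts (j-1)) := unitDir_in C2 j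
        have hne1 : C2.pts j - C2.pts (j-1) ≠ w := by
          intro h
          apply hdisj p' ?_ ?_
          · exact ⟨i, hi⟩
          · have e : C2.pts (j-1) = p' := by
              have e2 : C2.pts (j-1) = C2.pts j - (C2.pts j - C2.pts (j-1)) := by ring
              rw [e2, h, hj, hq'p']; ring
            exact e ▸ C2.pts_mem_covers (j-1)
        have hne2 : C2.pts j - C2.pts (j-1) ≠ -w := by
          intro h
          apply hdisj p' ?_ ?_
          · exact ⟨i, hi⟩
          · have e : C2.pts (j+1) = p' := by
              have e2 : C2.pts (j+1) = C2.pts j + (C2.pts j - C2.pts (j-1)) := by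
                rw [← hst]; ring
              rw [e2, h, hj, hq'p']; ring
            exact e ▸ C2.pts_mem_covers (j+1)
        rcases unit_perp hv hwu hne1 hne2 with h | h
        · refine ⟨j+1, ?_⟩
          have e2 : C2.pts (j+1) = C2.pts j + (C2.pts j - C2.pts (j-1)) := by
            rw [← hst]; ring
          rw [e2, h, hj, hs]
        · refine ⟨j-1, ?_⟩
          have e2 : C2.pts (j-1) = C2.pts j - (C2.pts j - C2.pts (j-1)) := by ring
          rw [e2, h, hj, hs]; ring
    have march : ∀ n : ℕ,
        (p + (n : Pixel) * s) ∈ C1.covers ∧ (q + (n : Pixel) * s) ∈ C2.covers := by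
      intro n
      induction n with
      | zero => simpa using ⟨hp, hq⟩
      | succ m ih =>
          have hdm : (q + (m : Pixel) * s) - (p + (m : Pixel) * s) = w := by
            rw [hw]; ring
          obtain ⟨h1, h2⟩ := step _ _ ih.1 ih.2 hdm
          constructor
          · have e : p + ((m+1 : ℕ) : Pixel) * s = (p + (m : Pixel) * s) + s := by
              push_cast; ring
            rw [e]; exact h1
          · have e : q + ((m+1 : ℕ) : Pixel) * s = (q + (m : Pixel) * s) + s := by
              push_cast; ring
            rw [e]; exact h2
    have hs1 : s.1 ≠ 0 ∨ s.2 ≠ 0 := by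
      rcases unitDir_cases hwu with h | h | h | h <;> rw [hs, h] <;> simp
    have hinj : Function.Injective (fun n : ℕ => p + (n : Pixel) * s) := by
      intro a b hab
      simp only [] at hab
      have h1 := congrArg Prod.fst hab
      have h2 := congrArg Prod.snd hab
      simp only [Prod.fst_add, Prod.snd_add, Prod.fst_mul, Prod.snd_mul,
        Prod.fst_natCast, Prod.snd_natCast, add_right_inj] at h1 h2
      rcases hs1 with h | h
      · exact Nat.cast_injective (mul_right_cancel₀ h h1)
      · exact Nat.cast_injective (mul_right_cancel₀ h h2)
    exact (Set.infinite_of_injective_forall_mem hinj (fun n => (march n).1)) C1.covers_finite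

/-- Merge two cycles whose covers touch (share a pixel or contain adjacent pixels). -/
lemma merge_touch (C1 C2 : GridCycle) {p q : Pixel}
    (hp : p ∈ C1.covers) (hq : q ∈ C2.covers) (hpq : p = q ∨ Adjacent p q) :
    ∃ D : GridCycle, D.covers = C1.covers ∪ C2.covers ∧
      D.turns ≤ C1.turns + C2.turns + 2 := by
  by_cases hint : ∃ x, x ∈ C1.covers ∧ x ∈ C2.covers
  · obtain ⟨x, h1, h2⟩ := hint
    exact merge_shared C1 C2 h1 h2
  · have hdisj : ∀ x, x ∈ C1.covers → x ∉ C2.covers := by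
      intro x h1 h2
      exact hint ⟨x, h1, h2⟩
    rcases hpq with rfl | hadj
    · exact absurd hq (hdisj p hp)
    · exact merge_bridge C1 C2 hdisj hp hq hadj
/-! ### Connectivity: touching across a cover partition -/

lemma cross_touch {P U V : Set Pixel} (hconn : ConnectedIn P) (hP : P = U ∪ V)
    (hU : U.Nonempty) (hV : V.Nonempty) :
    ∃ p ∈ U, ∃ q ∈ V, p = q ∨ Adjacent p q := by
  by_contra h
  push_neg at h
  obtain ⟨p0, hp0⟩ := hU
  obtain ⟨q0, hq0⟩ := hV
  have hchain := hconn p0 (by rw [hP]; exact Or.inl hp0) q0 (by rw [hP]; exact Or.inr hq0)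
  have key : ∀ x, Relation.ReflTransGen (fun a b => b ∈ P ∧ Adjacent a b) p0 x → x ∈ U := by
    intro x hx
    induction hx with
    | refl => exact hp0
    | tail hab hbc ih =>
        obtain ⟨hcP, hadj⟩ := hbc
        rw [hP] at hcP
        rcases hcP with h1 | h1
        · exact h1
        · exact absurd hadj (h _ ih _ h1).2
  exact (h q0 (key q0 hchain) q0 hq0).1 rfl

lemma biUnion_cons (C : GridCycle) (L : List GridCycle) :
    (⋃ D ∈ (C :: L), D.covers) = C.covers ∪ ⋃ D ∈ L, D.covers := by
  simp [List.mem_cons, Set.iUnion_or, Set.iUnion_union_distrib]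

lemma biUnion_perm {l l' : List GridCycle} (h : l.Perm l') :
    (⋃ C ∈ l, C.covers) = ⋃ C ∈ l', C.covers := by
  ext x
  simp only [Set.mem_iUnion, exists_prop]
  exact ⟨fun ⟨C, hC, hx⟩ => ⟨C, h.mem_iff.mp hC, hx⟩,
    fun ⟨C, hC, hx⟩ => ⟨C, h.mem_iff.mpr hC, hx⟩⟩

lemma coverTurns_cons (C : GridCycle) (L : List GridCycle) :
    coverTurns (C :: L) = C.turns + coverTurns L := rfl

lemma coverTurns_perm {l l' : List GridCycle} (h : l.Perm l') :
    coverTurns l = coverTurns l' := (h.map GridCycle.turns).sum_eq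

/-! ### Main induction -/

theorem merge_aux : ∀ n (CC : List GridCycle), CC.length ≤ n → CC ≠ [] →
    ConnectedIn (⋃ C ∈ CC, C.covers) →
    ∃ D : GridCycle, D.covers = (⋃ C ∈ CC, C.covers) ∧
      D.turns ≤ coverTurns CC + 2 * (CC.length - 1) := by
  intro n
  induction n with
  | zero =>
      intro CC hlen hne _
      cases CC with
      | nil => exact absurd rfl hne
      | cons a l => simp at hlen
  | succ n ih =>
      intro CC hlen hne hconn
      match CC with
      | [C] =>
          refine ⟨C, by simp, ?_⟩
          simp [coverTurns]
      | C0 :: C1 :: L =>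
          have hPdecomp : (⋃ C ∈ (C0 :: C1 :: L), C.covers)
              = C0.covers ∪ ⋃ C ∈ (C1 :: L), C.covers := biUnion_cons C0 (C1 :: L)
          have hV : (⋃ C ∈ (C1 :: L), C.covers).Nonempty := by
            refine ⟨C1.pts 0, ?_⟩
            simp only [Set.mem_iUnion, exists_prop]
            exact ⟨C1, List.mem_cons_self, C1.pts_mem_covers 0⟩
          obtain ⟨pp, hpU, qq, hqV, hpq⟩ :=
            cross_touch hconn hPdecomp C0.covers_nonempty hV
          have hex : ∃ C' ∈ (C1 :: L), qq ∈ C'.covers := by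
            simp only [Set.mem_iUnion, exists_prop] at hqV
            exact hqV
          obtain ⟨C', hC'mem, hqq⟩ := hex
          obtain ⟨L1, L2, hsplit⟩ := List.append_of_mem hC'mem
          have hperm : (C1 :: L).Perm (C' :: (L1 ++ L2)) := by
            rw [hsplit]; exact List.perm_middle
          obtain ⟨D0, hD0cov, hD0t⟩ := merge_touch C0 C' hpU hqq hpq
          have hVdec : (⋃ C ∈ (C1 :: L), C.covers)
              = C'.covers ∪ ⋃ C ∈ (L1 ++ L2), C.covers := by
            rw [biUnion_perm hperm, biUnion_cons]
          have hlenM : (C1 :: L).length = (L1 ++ L2).length + 1 := by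
            rw [hperm.length_eq]; simp
          have hcovD : (⋃ C ∈ (D0 :: (L1 ++ L2)), C.covers)
              = ⋃ C ∈ (C0 :: C1 :: L), C.covers := by
            rw [biUnion_cons, hD0cov, hPdecomp, hVdec, Set.union_assoc]
          have hconn2 : ConnectedIn (⋃ C ∈ (D0 :: (L1 ++ L2)), C.covers) := by
            rw [hcovD]; exact hconn
          have hlen2 : (D0 :: (L1 ++ L2)).length ≤ n := by
            simp only [List.length_cons] at hlen hlenM ⊢
            omega
          obtain ⟨D, hDcov, hDt⟩ := ih (D0 :: (L1 ++ L2)) hlen2 (by simp) hconn2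
          refine ⟨D, by rw [hDcov, hcovD], ?_⟩
          have ht3 : coverTurns (C1 :: L) = C'.turns + coverTurns (L1 ++ L2) := by
            rw [coverTurns_perm hperm, coverTurns_cons]
          rw [coverTurns_cons, ht3]
          rw [coverTurns_cons] at hDt
          simp only [List.length_cons] at hDt hlenM ⊢
          omega

theorem merge_cycle_collection' (CC : List GridCycle) (hne : CC ≠ [])
    (P : Set Pixel) (hP : P = ⋃ C ∈ CC, C.covers) (hconn : ConnectedIn P) :
    ∃ C : GridCycle, IsTour P C ∧
      C.turns ≤ coverTurns CC + 2 * (CC.length - 1) := by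
  subst hP
  obtain ⟨D, hcov, ht⟩ := merge_aux CC.length CC le_rfl hne hconn
  exact ⟨D, hcov, ht⟩
/-- Merging a collection of cycles: if the union `P` of the covered pixel sets
of `c ≥ 1` cycles with `t` total turns is connected, then `P` has a tour with
at most `t + 2(c − 1)` turns. -/
theorem merge_cycle_collection (CC : List GridCycle) (hne : CC ≠ [])
    (P : Set Pixel) (hP : P = ⋃ C ∈ CC, C.covers) (hconn : ConnectedIn P) :
    ∃ C : GridCycle, IsTour P C ∧
      C.turns ≤ coverTurns CC + 2 * (CC.length - 1) := by
  subst hP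
  exact merge_aux CC.length CC le_rfl hne hconn
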